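/- Assume σ_d > 0 and that all entries of Y lie in {0,1}. Let T ⊆ {1,…,n} be a set of (non-template) users, let L be the n×n diagonal matrix with L_{jj} = 1 if j ∈ T and L_{jj} = 0 otherwise, and let s_j denote the j-th column of U^d·(U^d)ᵀ. For each item i ∈ {1,…,m}, let N_i = {k : Y_{ki} = 1}, and for each user j, let N_j = {i : Y_{ji} = 1}. Then ‖Y − Y·V^d·(S^d)⁻¹·(U^d)ᵀ·(I_n − L)·Y‖_F ≤ ‖Y − U^d·S^d·(V^d)ᵀ‖_F + √( Σ_{j ∈ T} ‖s_j‖₂² · Σ_{i ∈ N_j} |N_i| ). (Theorem 2: the INMO-MF error when ignoring the users in T exceeds the optimal rank-d error by at most the square root of Σ_{j ∈ T} ‖s_j‖₂² Σ_{i ∈ N_j} |N_i|, so selecting as template users those j with the largest ‖s_j‖₂² Σ_{i ∈ N_j} |N_i| minimizes this upper bound.) -/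

import Mathlib

open Matrix

/-- Frobenius norm of a real matrix: square root of the sum of squares of entries. -/
noncomputable def frobNorm {n m : ℕ} (M : Matrix (Fin n) (Fin m) ℝ) : ℝ :=
  Real.sqrt (∑ i, ∑ j, (M i j) ^ 2)

/-- Euclidean norm on `ℝ^n`. -/
noncomputable def eucNorm {n : ℕ} (v : Fin n → ℝ) : ℝ :=
  Real.sqrt (∑ k, (v k) ^ 2)

/-- The submatrix consisting of the first `d` columns of a matrix with `p` columns. -/
def firstCols {n p : ℕ} (d : ℕ) (h : d ≤ p) (U : Matrix (Fin n) (Fin p) ℝ) :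
    Matrix (Fin n) (Fin d) ℝ :=
  fun i j => U i (Fin.castLE h j)

/-- The truncated diagonal matrix `S^d = diag(σ_1, …, σ_d)`. -/
noncomputable def diagTrunc {p : ℕ} (d : ℕ) (h : d ≤ p) (σ : Fin p → ℝ) :
    Matrix (Fin d) (Fin d) ℝ :=
  Matrix.diagonal (fun j => σ (Fin.castLE h j))

lemma frobNorm_eq_norm {n m : ℕ} (M : Matrix (Fin n) (Fin m) ℝ) :
    frobNorm M = ‖(WithLp.equiv 2 (Fin n × Fin m → ℝ)).symm (fun q => M q.1 q.2)‖ := by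
  rw [EuclideanSpace.norm_eq]
  simp [frobNorm, Fintype.sum_prod_type, WithLp.equiv_symm_apply, PiLp.toLp_apply, Real.norm_eq_abs, sq_abs]

lemma frobNorm_add_le {n m : ℕ} (A B : Matrix (Fin n) (Fin m) ℝ) :
    frobNorm (A + B) ≤ frobNorm A + frobNorm B := by
  rw [frobNorm_eq_norm, frobNorm_eq_norm, frobNorm_eq_norm]
  have h : (WithLp.equiv 2 (Fin n × Fin m → ℝ)).symm (fun q => (A + B) q.1 q.2)
      = (WithLp.equiv 2 (Fin n × Fin m → ℝ)).symm (fun q => A q.1 q.2)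
        + (WithLp.equiv 2 (Fin n × Fin m → ℝ)).symm (fun q => B q.1 q.2) := by
    ext q
    simp [WithLp.equiv_symm_apply, PiLp.toLp_apply, Matrix.add_apply]
  rw [h]
  exact norm_add_le _ _

lemma mul_firstCols {a b p d : ℕ} (h : d ≤ p) (M : Matrix (Fin a) (Fin b) ℝ)
    (N : Matrix (Fin b) (Fin p) ℝ) :
    M * firstCols d h N = firstCols d h (M * N) := by
  ext i j
  simp [firstCols, Matrix.mul_apply]

/-- Theorem 2 of the paper: with `Y` a 0/1 interaction matrix, `T` a set of
non-template users indicated by the diagonal matrix `L`, and `s_j` the `j`-th column of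
`U^d (U^d)ᵀ`, the INMO-MF error when ignoring the users in `T` satisfies
`‖Y − Y V^d (S^d)⁻¹ (U^d)ᵀ (I − L) Y‖_F
  ≤ ‖Y − U^d S^d (V^d)ᵀ‖_F + √( Σ_{j ∈ T} ‖s_j‖₂² Σ_{i ∈ N_j} |N_i| )`. -/
theorem inmo_template_selection_bound
    (n m d p : ℕ) (hn : 0 < n) (hm : 0 < m) (hd : 0 < d)
    (hp : p = min n m) (hdp : d ≤ p)
    (Y : Matrix (Fin n) (Fin m) ℝ)
    (U : Matrix (Fin n) (Fin p) ℝ) (V : Matrix (Fin m) (Fin p) ℝ)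
    (σ : Fin p → ℝ)
    (hU : Uᵀ * U = 1) (hV : Vᵀ * V = 1)
    (hσmono : Antitone σ) (hσ0 : ∀ j, 0 ≤ σ j)
    (hY : Y = U * Matrix.diagonal σ * Vᵀ)
    (hσd : 0 < σ ⟨d - 1, by omega⟩)
    (hY01 : ∀ j i, Y j i = 0 ∨ Y j i = 1)
    (T : Finset (Fin n))
    (L : Matrix (Fin n) (Fin n) ℝ)
    (hL : L = Matrix.diagonal (fun j => if j ∈ T then (1 : ℝ) else 0)) :
    frobNorm (Y - Y * firstCols d hdp V * (diagTrunc d hdp σ)⁻¹ * (firstCols d hdp U)ᵀ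
          * (1 - L) * Y)
      ≤ frobNorm (Y - firstCols d hdp U * diagTrunc d hdp σ * (firstCols d hdp V)ᵀ)
          + Real.sqrt (∑ j ∈ T,
              (eucNorm (fun k => (firstCols d hdp U * (firstCols d hdp U)ᵀ) k j)) ^ 2
                * ∑ i ∈ Finset.univ.filter (fun i => Y j i = 1),
                    ((Finset.univ.filter (fun k => Y k i = 1)).card : ℝ)) := by
  set Ud := firstCols d hdp U with hUd
  set Vd := firstCols d hdp V with hVd
  set Sd := diagTrunc d hdp σ with hSd
  -- positivity of first d singular values
  have hσpos : ∀ j : Fin d, 0 < σ (Fin.castLE hdp j) := by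
    intro j
    refine lt_of_lt_of_le hσd (hσmono ?_)
    have := j.isLt
    simp only [Fin.le_def, Fin.castLE]
    omega
  have hdet : IsUnit Sd.det := by
    rw [hSd, diagTrunc, Matrix.det_diagonal]
    exact isUnit_iff_ne_zero.2 (Finset.prod_ne_zero_iff.2 fun j _ => (hσpos j).ne')
  have hSdinv : Sd * Sd⁻¹ = 1 := Matrix.mul_nonsing_inv _ hdet
  -- Y * Vd = Ud * Sd
  have hYVd : Y * Vd = Ud * Sd := by
    rw [hVd, mul_firstCols]
    have h1 : Y * V = U * Matrix.diagonal σ := by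
      rw [hY, Matrix.mul_assoc (U * Matrix.diagonal σ), hV, Matrix.mul_one]
    rw [h1]
    ext k b
    simp [firstCols, hSd, diagTrunc, Matrix.mul_diagonal, hUd]
  have hA : Y * Vd * Sd⁻¹ = Ud := by
    rw [hYVd, Matrix.mul_assoc, hSdinv, Matrix.mul_one]
  -- Udᵀ * Y = Sd * Vdᵀ
  have hUY : Uᵀ * Y = Matrix.diagonal σ * Vᵀ := by
    rw [hY, ← Matrix.mul_assoc, ← Matrix.mul_assoc, hU, Matrix.one_mul]
  have hB : Udᵀ * Y = Sd * Vdᵀ := by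
    ext b j
    have h2 : (Udᵀ * Y) b j = (Uᵀ * Y) (Fin.castLE hdp b) j := by
      simp [Matrix.mul_apply, hUd, firstCols]
    rw [h2, hUY]
    simp [Matrix.diagonal_mul, hSd, diagTrunc, hVd, firstCols]
  -- rearrange the matrix inside the left norm
  have h1 : Ud * Udᵀ * (1 - L) * Y = Ud * (Sd * Vdᵀ) - Ud * (Udᵀ * (L * Y)) := by
    simp only [Matrix.mul_sub, Matrix.sub_mul, Matrix.mul_one, Matrix.mul_assoc, hB]
  have key : Y - Y * Vd * Sd⁻¹ * Udᵀ * (1 - L) * Y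
      = (Y - Ud * Sd * Vdᵀ) + Ud * (Udᵀ * (L * Y)) := by
    rw [hA, h1, ← Matrix.mul_assoc Ud Sd Vdᵀ]
    abel
  rw [key]
  refine (frobNorm_add_le _ _).trans (add_le_add_right ?_ _)
  -- now bound the perturbation term
  set P := Ud * Udᵀ with hP
  have hent : ∀ k i, (Ud * (Udᵀ * (L * Y))) k i = ∑ j ∈ T, P k j * Y j i := by
    intro k i
    rw [← Matrix.mul_assoc, ← hP, Matrix.mul_apply]
    have : ∀ j, (L * Y) j i = if j ∈ T then Y j i else 0 := by
      intro j
      rw [hL, Matrix.diagonal_mul]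
      by_cases h : j ∈ T <;> simp [h]
    simp only [this, mul_ite, mul_zero]
    rw [Finset.sum_ite_mem, Finset.univ_inter]
  have hY0 : ∀ j i, 0 ≤ Y j i := fun j i => by rcases hY01 j i with h | h <;> simp [h]
  have hYsq : ∀ j i, Y j i * Y j i = Y j i := fun j i => by
    rcases hY01 j i with h | h <;> simp [h]
  have hcard : ∀ i, ((Finset.univ.filter fun k => Y k i = 1).card : ℝ) = ∑ k, Y k i := by
    intro i
    rw [Finset.card_filter]
    push_cast
    refine Finset.sum_congr rfl fun k _ => ?_
    rcases hY01 k i with h | h <;> simp [h]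
  -- the right-hand side sum, rewritten
  have hRHS : ∀ j, (eucNorm fun k => P k j) ^ 2
        * ∑ i ∈ Finset.univ.filter (fun i => Y j i = 1),
            ((Finset.univ.filter (fun k => Y k i = 1)).card : ℝ)
      = (∑ k, (P k j) ^ 2) * ∑ i, Y j i * ∑ k, Y k i := by
    intro j
    have h1 : (eucNorm fun k => P k j) ^ 2 = ∑ k, (P k j) ^ 2 := by
      rw [eucNorm, Real.sq_sqrt (Finset.sum_nonneg fun k _ => sq_nonneg _)]
    have h2 : ∑ i ∈ Finset.univ.filter (fun i => Y j i = 1),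
        ((Finset.univ.filter (fun k => Y k i = 1)).card : ℝ) = ∑ i, Y j i * ∑ k, Y k i := by
      rw [Finset.sum_filter]
      refine Finset.sum_congr rfl fun i _ => ?_
      rw [hcard]
      rcases hY01 j i with h | h <;> simp [h]
    rw [h1, h2]
  -- key squared bound
  have hsq : ∑ k, ∑ i, ((Ud * (Udᵀ * (L * Y))) k i) ^ 2
      ≤ ∑ j ∈ T, (∑ k, (P k j) ^ 2) * ∑ i, Y j i * ∑ k, Y k i := by
    have step1 : ∀ k i, ((Ud * (Udᵀ * (L * Y))) k i) ^ 2
        ≤ (∑ j ∈ T, (P k j) ^ 2 * Y j i) * ∑ k', Y k' i := by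
      intro k i
      rw [hent]
      have cs := Finset.sum_mul_sq_le_sq_mul_sq T (fun j => P k j * Y j i) (fun j => Y j i)
      have e1 : ∑ j ∈ T, (P k j * Y j i) * Y j i = ∑ j ∈ T, P k j * Y j i := by
        refine Finset.sum_congr rfl fun j _ => ?_
        rw [mul_assoc, hYsq]
      have e2 : ∑ j ∈ T, (P k j * Y j i) ^ 2 = ∑ j ∈ T, (P k j) ^ 2 * Y j i := by
        refine Finset.sum_congr rfl fun j _ => ?_
        rw [mul_pow, pow_two (Y j i), hYsq]
      have e3 : ∑ j ∈ T, (Y j i) ^ 2 ≤ ∑ k', Y k' i := by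
        calc ∑ j ∈ T, (Y j i) ^ 2 = ∑ j ∈ T, Y j i := by
              refine Finset.sum_congr rfl fun j _ => ?_
              rw [pow_two, hYsq]
        _ ≤ ∑ k', Y k' i :=
              Finset.sum_le_sum_of_subset_of_nonneg (Finset.subset_univ T)
                (fun j _ _ => hY0 j i)
      rw [e1, e2] at cs
      refine cs.trans (mul_le_mul_of_nonneg_left e3 ?_)
      exact Finset.sum_nonneg fun j _ => mul_nonneg (sq_nonneg _) (hY0 j i)
    calc ∑ k, ∑ i, ((Ud * (Udᵀ * (L * Y))) k i) ^ 2
        ≤ ∑ k, ∑ i, (∑ j ∈ T, (P k j) ^ 2 * Y j i) * ∑ k', Y k' i :=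
          Finset.sum_le_sum fun k _ => Finset.sum_le_sum fun i _ => step1 k i
      _ = ∑ j ∈ T, (∑ k, (P k j) ^ 2) * ∑ i, Y j i * ∑ k, Y k i := by
          calc ∑ k, ∑ i, (∑ j ∈ T, (P k j) ^ 2 * Y j i) * ∑ k', Y k' i
              = ∑ k, ∑ i, ∑ j ∈ T, (P k j) ^ 2 * Y j i * ∑ k', Y k' i := by
                simp only [Finset.sum_mul]
            _ = ∑ k, ∑ j ∈ T, ∑ i, (P k j) ^ 2 * Y j i * ∑ k', Y k' i :=
                Finset.sum_congr rfl fun k _ => Finset.sum_comm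
            _ = ∑ j ∈ T, ∑ k, ∑ i, (P k j) ^ 2 * Y j i * ∑ k', Y k' i :=
                Finset.sum_comm
            _ = ∑ j ∈ T, (∑ k, (P k j) ^ 2) * ∑ i, Y j i * ∑ k, Y k i := by
                refine Finset.sum_congr rfl fun j _ => ?_
                rw [Finset.sum_mul_sum]
                exact Finset.sum_congr rfl fun k _ =>
                  Finset.sum_congr rfl fun i _ => (mul_assoc _ _ _)
  -- conclude
  have : frobNorm (Ud * (Udᵀ * (L * Y)))
      ≤ Real.sqrt (∑ j ∈ T, (∑ k, (P k j) ^ 2) * ∑ i, Y j i * ∑ k, Y k i) :=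
    Real.sqrt_le_sqrt hsq
  refine this.trans ?_
  apply le_of_eq
  congr 1
  exact Finset.sum_congr rfl fun j _ => (hRHS j).symm
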